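/- arXiv:1904.05563 — 2 statements merged into one kernel-verified Lean document; each statement's English description precedes it below -/
import Mathlib

section
/- Let X₀ : ℝ^d → ℝ be a centered Gaussian field with stationary covariance r (so E[X₀(s)X₀(t)] = r(t - s), r(0) = 1). Define Y(s,t) := (X₀(s) + X₀(t)) / √(2 + 2r(t - s)) for pairs (s,t) with r(t-s) > -1. Then there exists an absolute constant C such that for all valid (s,t), (s',t'): E[(Y(s,t) - Y(s',t'))²] ≤ C (E[(X₀(s) - X₀(s'))²] + E[(X₀(t) - X₀(t'))²]). -/
/-!
Viewed in `L²(μ)`, the variables `X₀ u` are unit vectors and `Y(s,t)` is the normalization of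
`X₀ s + X₀ t`, a vector of squared norm `2 + 2 r(t - s) ≥ 2δ`. Normalization satisfies
`‖x‖ ‖x/‖x‖ - y/‖y‖‖ ≤ 2 ‖x - y‖`, and `‖(a + b) - (a' + b')‖² ≤ 2 (‖a - a'‖² + ‖b - b'‖²)`,
so the bound holds with `C = 4 / δ`.
-/

open MeasureTheory

namespace NormedSpace

variable {V : Type*} [NormedAddCommGroup V] [NormedSpace ℝ V]

lemma norm_normalize_le_one (y : V) : ‖normalize y‖ ≤ 1 := by
  rcases eq_or_ne y 0 with rfl | hy
  · simp
  · exact (norm_normalize hy).le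

lemma norm_mul_norm_normalize_sub_le (x y : V) :
    ‖x‖ * ‖normalize x - normalize y‖ ≤ 2 * ‖x - y‖ := by
  have hsplit : ‖x‖ • (normalize x - normalize y) = (x - y) + (‖y‖ - ‖x‖) • normalize y := by
    rw [smul_sub, sub_smul, norm_smul_normalize, norm_smul_normalize]; abel
  calc ‖x‖ * ‖normalize x - normalize y‖
      = ‖(x - y) + (‖y‖ - ‖x‖) • normalize y‖ := by
        rw [← hsplit, norm_smul, Real.norm_of_nonneg (norm_nonneg x)]
    _ ≤ ‖x - y‖ + |‖y‖ - ‖x‖| * ‖normalize y‖ := by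
        rw [← Real.norm_eq_abs, ← norm_smul]; exact norm_add_le _ _
    _ ≤ ‖x - y‖ + ‖x - y‖ * 1 := by
        gcongr
        · rw [abs_sub_comm]; exact abs_norm_sub_norm_le x y
        · exact norm_normalize_le_one y
    _ = 2 * ‖x - y‖ := by ring

lemma norm_normalize_add_sub_sq_le {a b a' b' : V} {δ : ℝ} (hδ : 0 < δ)
    (hab : 2 * δ ≤ ‖a + b‖ ^ 2) :
    ‖normalize (a + b) - normalize (a' + b')‖ ^ 2 ≤ 4 / δ * (‖a - a'‖ ^ 2 + ‖b - b'‖ ^ 2) := by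
  set n := ‖normalize (a + b) - normalize (a' + b')‖
  have hlip := norm_mul_norm_normalize_sub_le (a + b) (a' + b')
  have hdiff : ‖a + b - (a' + b')‖ ≤ ‖a - a'‖ + ‖b - b'‖ := by
    rw [add_sub_add_comm]; exact norm_add_le _ _
  have key : 2 * δ * n ^ 2 ≤ 8 * (‖a - a'‖ ^ 2 + ‖b - b'‖ ^ 2) := by
    calc 2 * δ * n ^ 2 ≤ ‖a + b‖ ^ 2 * n ^ 2 := by gcongr
      _ = (‖a + b‖ * n) ^ 2 := by ring
      _ ≤ (2 * (‖a - a'‖ + ‖b - b'‖)) ^ 2 := by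
        gcongr ?_ ^ 2; linarith
      _ ≤ 8 * (‖a - a'‖ ^ 2 + ‖b - b'‖ ^ 2) := by nlinarith [sq_nonneg (‖a - a'‖ - ‖b - b'‖)]
  rw [div_mul_eq_mul_div, le_div_iff₀ hδ]
  linarith

end NormedSpace

namespace MeasureTheory.L2

variable {Ω : Type*} [MeasurableSpace Ω] {μ : Measure Ω}

lemma ae_eq_coeFn_sub {f g : Ω → ℝ} {F G : Ω →₂[μ] ℝ} (hf : f =ᵐ[μ] F) (hg : g =ᵐ[μ] G) :
    (fun ω ↦ f ω - g ω) =ᵐ[μ] ⇑(F - G) :=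
  (hf.sub hg).trans (Lp.coeFn_sub F G).symm

lemma integral_mul_eq_inner {f g : Ω → ℝ} {F G : Ω →₂[μ] ℝ} (hf : f =ᵐ[μ] F) (hg : g =ᵐ[μ] G) :
    ∫ ω, f ω * g ω ∂μ = inner ℝ F G := by
  rw [inner_def]
  refine integral_congr_ae ?_
  filter_upwards [hf, hg] with ω hfω hgω
  simp [hfω, hgω, mul_comm]

lemma integral_sq_eq_norm_sq {f : Ω → ℝ} {F : Ω →₂[μ] ℝ} (hf : f =ᵐ[μ] F) :
    ∫ ω, f ω ^ 2 ∂μ = ‖F‖ ^ 2 := by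
  simp_rw [sq]
  rw [integral_mul_eq_inner hf hf, ← sq, real_inner_self_eq_norm_sq]

end MeasureTheory.L2

theorem stmt7_general {Ω : Type*} [MeasurableSpace Ω] (μ : Measure Ω)
    {d : ℕ} (X₀ : (Fin d → ℝ) → Ω → ℝ) (r : (Fin d → ℝ) → ℝ)
    (hL2 : ∀ t, MemLp (X₀ t) 2 μ)
    (hcov : ∀ s t, ∫ ω, X₀ s ω * X₀ t ω ∂μ = r (t - s))
    (hr0 : r 0 = 1)
    (δ : ℝ) (hδ : 0 < δ) :
    ∃ C > (0:ℝ), ∀ s t s' t' : Fin d → ℝ,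
      -1 + δ ≤ r (t - s) → -1 + δ ≤ r (t' - s') →
      ∫ ω, ((X₀ s ω + X₀ t ω) / Real.sqrt (2 + 2 * r (t - s))
            - (X₀ s' ω + X₀ t' ω) / Real.sqrt (2 + 2 * r (t' - s'))) ^ 2 ∂μ ≤
        C * ((∫ ω, (X₀ s ω - X₀ s' ω) ^ 2 ∂μ) + ∫ ω, (X₀ t ω - X₀ t' ω) ^ 2 ∂μ) := by
  set x : (Fin d → ℝ) → Ω →₂[μ] ℝ := fun u ↦ (hL2 u).toLp
  have hx : ∀ u, X₀ u =ᵐ[μ] x u := fun u ↦ (hL2 u).coeFn_toLp.symm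
  have hnorm : ∀ s t, ‖x s + x t‖ = Real.sqrt (2 + 2 * r (t - s)) := by
    intro s t
    have hunit : ∀ u, ‖x u‖ ^ 2 = 1 := fun u ↦ by
      rw [← real_inner_self_eq_norm_sq, ← L2.integral_mul_eq_inner (hx u) (hx u), hcov, sub_self,
        hr0]
    rw [← Real.sqrt_sq (norm_nonneg _), norm_add_sq_real, hunit, hunit,
      ← L2.integral_mul_eq_inner (hx s) (hx t), hcov]
    ring_nf
  have hY : ∀ s t, (fun ω ↦ (X₀ s ω + X₀ t ω) / Real.sqrt (2 + 2 * r (t - s)))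
      =ᵐ[μ] ⇑(NormedSpace.normalize (x s + x t) : Ω →₂[μ] ℝ) := by
    intro s t
    filter_upwards [hx s, hx t, Lp.coeFn_smul ‖x s + x t‖⁻¹ (x s + x t),
      Lp.coeFn_add (x s) (x t)] with ω hs ht hsmul hadd
    change _ = (‖x s + x t‖⁻¹ • (x s + x t) : Ω →₂[μ] ℝ) ω
    rw [hsmul, Pi.smul_apply, hadd, Pi.add_apply, ← hs, ← ht, hnorm,
      smul_eq_mul, inv_mul_eq_div]
  refine ⟨4 / δ, by positivity, fun s t s' t' hst _ ↦ ?_⟩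
  rw [L2.integral_sq_eq_norm_sq (L2.ae_eq_coeFn_sub (hY s t) (hY s' t')),
    L2.integral_sq_eq_norm_sq (L2.ae_eq_coeFn_sub (hx s) (hx s')),
    L2.integral_sq_eq_norm_sq (L2.ae_eq_coeFn_sub (hx t) (hx t'))]
  refine NormedSpace.norm_normalize_add_sub_sq_le hδ ?_
  rw [hnorm, Real.sq_sqrt (by linarith)]
  linarith

/-- Increment bound for the normalized sum field
`Y(s,t) = (X₀(s) + X₀(t)) / √(2 + 2 r(t-s))` of a centered stationary field `X₀` with
covariance `r`, `r 0 = 1`, on the domain where `r(t-s) ≥ -1 + δ`: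
`E (Y(s,t) - Y(s',t'))² ≤ C (E (X₀(s)-X₀(s'))² + E (X₀(t)-X₀(t'))²)`. -/
theorem stmt7 {Ω : Type*} [MeasurableSpace Ω] (μ : Measure Ω) [IsProbabilityMeasure μ]
    {d : ℕ} (X₀ : (Fin d → ℝ) → Ω → ℝ) (r : (Fin d → ℝ) → ℝ)
    (hL2 : ∀ t, MemLp (X₀ t) 2 μ)
    (hcent : ∀ t, ∫ ω, X₀ t ω ∂μ = 0)
    (hcov : ∀ s t, ∫ ω, X₀ s ω * X₀ t ω ∂μ = r (t - s))
    (hr0 : r 0 = 1)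
    (δ : ℝ) (hδ : 0 < δ) :
    ∃ C > (0:ℝ), ∀ s t s' t' : Fin d → ℝ,
      -1 + δ ≤ r (t - s) → -1 + δ ≤ r (t' - s') →
      ∫ ω, ((X₀ s ω + X₀ t ω) / Real.sqrt (2 + 2 * r (t - s))
            - (X₀ s' ω + X₀ t' ω) / Real.sqrt (2 + 2 * r (t' - s'))) ^ 2 ∂μ ≤
        C * ((∫ ω, (X₀ s ω - X₀ s' ω) ^ 2 ∂μ) + ∫ ω, (X₀ t ω - X₀ t' ω) ^ 2 ∂μ) :=
  stmt7_general μ X₀ r hL2 hcov hr0 δ hδ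
end

section
/- Let h : ℝ^d → [0,∞) be continuous with h(0) = 0 and h(t) > 0 for t ≠ 0, and suppose u²(1 - r(q(u) ∘ t)) → h(t) uniformly on compact sets as u → ∞, where q(u) ∘ t denotes componentwise scaling and r is continuous with r ≤ 1, r(0) = 1. Then for any continuous function c : ℝ^d \ {0} → (0,∞) with c(t) → 1 as t → 0, one has (1 - r(c(t)·t))/(1 - r(t)) → 1 as t → 0 along any path on which 1 - r(t) > 0. -/
/-!
Write `t = q(u) ∘ s(u)` and `x(u) = c(t) • s(u)`, so that `c(t) • t = q(u) ∘ x(u)`. As `t → 0`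
avoiding `0`, `c(t) → 1`, hence `x(u) - s(u) → 0` while both stay in the compact set
`[0, 2] • K`. With `F_u(y) = u²(1 - r(q(u) ∘ y))`, uniform convergence `F_u → h` on that set and
uniform continuity of `h` there give `F_u(x(u)) - F_u(s(u)) → 0`, while `F_u(s(u))` stays above
half the positive minimum of `h` on `K`. So `F_u(x(u)) / F_u(s(u))`, which is the quotient in
question, tends to `1`.
-/

open Filter Topology Uniformity Pointwise

section UniformLimits

variable {ι α β : Type*} [UniformSpace β] {l : Filter ι}

theorem TendstoUniformlyOn.tendsto_uniformity_comp {F : ι → α → β} {f : α → β} {K : Set α}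
    (hF : TendstoUniformlyOn F f l K) {x : ι → α} (hx : ∀ᶠ i in l, x i ∈ K) :
    Tendsto (fun i => (f (x i), F i (x i))) l (𝓤 β) :=
  (tendstoUniformlyOn_iff_tendsto.1 hF).comp (tendsto_id.prodMk (tendsto_principal.2 hx))

variable [UniformSpace α]

theorem UniformContinuousOn.tendsto_uniformity_comp {f : α → β} {K : Set α}
    (hf : UniformContinuousOn f K) {x y : ι → α} (hx : ∀ᶠ i in l, x i ∈ K)
    (hy : ∀ᶠ i in l, y i ∈ K) (hxy : Tendsto (fun i => (x i, y i)) l (𝓤 α)) :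
    Tendsto (fun i => (f (x i), f (y i))) l (𝓤 β) :=
  Tendsto.comp hf <| tendsto_inf.2 ⟨hxy, tendsto_principal.2 <| by
    filter_upwards [hx, hy] with i hxi hyi using ⟨hxi, hyi⟩⟩

theorem TendstoUniformlyOn.tendsto_uniformity_comp_of_uniformContinuousOn
    {F : ι → α → β} {f : α → β} {K : Set α} (hF : TendstoUniformlyOn F f l K)
    (hf : UniformContinuousOn f K) {x y : ι → α} (hx : ∀ᶠ i in l, x i ∈ K)
    (hy : ∀ᶠ i in l, y i ∈ K) (hxy : Tendsto (fun i => (x i, y i)) l (𝓤 α)) :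
    Tendsto (fun i => (F i (x i), F i (y i))) l (𝓤 β) :=
  ((hF.tendsto_uniformity_comp hx).uniformity_symm.uniformity_trans
    (hf.tendsto_uniformity_comp hx hy hxy)).uniformity_trans (hF.tendsto_uniformity_comp hy)

end UniformLimits

theorem TendstoUniformlyOn.eventually_forall_gt {ι α : Type*} {l : Filter ι}
    {F : ι → α → ℝ} {f : α → ℝ} {K : Set α} (hF : TendstoUniformlyOn F f l K) {a b : ℝ}
    (hab : a < b) (hf : ∀ y ∈ K, b ≤ f y) : ∀ᶠ i in l, ∀ y ∈ K, a < F i y := by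
  filter_upwards [hF.neg.eventually_forall_lt (neg_lt_neg hab) fun y hy => neg_le_neg (hf y hy)]
    with i hi y hy
  simpa using hi y hy

theorem tendsto_div_of_tendsto_uniformity {ι : Type*} {l : Filter ι} {N D : ι → ℝ}
    (hND : Tendsto (fun i => (N i, D i)) l (𝓤 ℝ)) {ε : ℝ} (hε : 0 < ε)
    (hD : ∀ᶠ i in l, ε < D i) : Tendsto (fun i => N i / D i) l (𝓝 1) := by
  have hsub : Tendsto (fun i => N i - D i) l (𝓝 0) := by
    rw [tendsto_zero_iff_norm_tendsto_zero]
    simpa [Real.dist_eq] using tendsto_uniformity_iff_dist_tendsto_zero.1 hND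
  have hinv : IsBoundedUnder (· ≤ ·) l fun i => ‖(D i)⁻¹‖ := by
    refine isBoundedUnder_of_eventually_le (a := ε⁻¹) ?_
    filter_upwards [hD] with i hi
    rw [norm_inv, Real.norm_of_nonneg (hε.trans hi).le]
    exact inv_anti₀ hε hi.le
  have hlim := (hsub.zero_mul_isBoundedUnder_le hinv).const_add 1
  rw [add_zero] at hlim
  refine hlim.congr' ?_
  filter_upwards [hD] with i hi
  field_simp [(hε.trans hi).ne']
  ring

theorem isBoundedUnder_norm_of_eventually_mem {ι E : Type*} [SeminormedAddCommGroup E]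
    {l : Filter ι} {K : Set E} (hK : Bornology.IsBounded K) {s : ι → E}
    (hs : ∀ᶠ i in l, s i ∈ K) : IsBoundedUnder (· ≤ ·) l fun i => ‖s i‖ := by
  obtain ⟨C, hC⟩ := hK.exists_norm_le
  exact isBoundedUnder_of_eventually_le (hs.mono fun i hi => hC _ hi)

theorem tendsto_smul_uniformity_of_tendsto_one {ι 𝕜 E : Type*} [NormedField 𝕜]
    [SeminormedAddCommGroup E] [NormedSpace 𝕜 E] {l : Filter ι} {a : ι → 𝕜}
    (ha : Tendsto a l (𝓝 1)) {s : ι → E} (hs : IsBoundedUnder (· ≤ ·) l fun i => ‖s i‖) :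
    Tendsto (fun i => (a i • s i, s i)) l (𝓤 E) := by
  have ha1 : Tendsto (fun i => a i - 1) l (𝓝 0) := by simpa using ha.sub_const 1
  rw [tendsto_uniformity_iff_dist_tendsto_zero]
  simpa [dist_eq_norm, sub_smul] using (ha1.zero_smul_isBoundedUnder_le hs).norm

theorem tendsto_mul_nhdsNE_zero {ι κ R : Type*} [Fintype κ] [NormedRing R] [NoZeroDivisors R]
    {l : Filter ι} {q s : ι → κ → R} {K : Set (κ → R)} (hK : Bornology.IsBounded K)
    (hK0 : (0 : κ → R) ∉ K) (hq0 : Tendsto q l (𝓝 0)) (hq_ne : ∀ᶠ i in l, ∀ k, q i k ≠ 0)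
    (hs : ∀ᶠ i in l, s i ∈ K) : Tendsto (fun i => q i * s i) l (𝓝[≠] 0) := by
  refine tendsto_nhdsWithin_iff.2
    ⟨hq0.zero_mul_isBoundedUnder_le (isBoundedUnder_norm_of_eventually_mem hK hs), ?_⟩
  filter_upwards [hq_ne, hs] with i hqi hsi hzero
  have hsi0 : s i = 0 :=
    funext fun k => (mul_eq_zero.1 (congrFun hzero k)).resolve_left (hqi k)
  exact hK0 (hsi0 ▸ hsi)

theorem stmt15_general {d : ℕ} (r h : (Fin d → ℝ) → ℝ) (q : ℝ → Fin d → ℝ)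
    (c : (Fin d → ℝ) → ℝ)
    (hh_cont : Continuous h) (hh_pos : ∀ t, t ≠ 0 → 0 < h t)
    (hq_pos : ∀ u > (0:ℝ), ∀ i, 0 < q u i)
    (hq0 : Tendsto q atTop (nhds 0))
    (hconv : ∀ K : Set (Fin d → ℝ), IsCompact K →
      TendstoUniformlyOn (fun u t => u ^ 2 * (1 - r (fun i => q u i * t i))) h atTop K)
    (hc1 : Tendsto c (nhdsWithin 0 {(0 : Fin d → ℝ)}ᶜ) (nhds 1)) :
    ∀ K : Set (Fin d → ℝ), IsCompact K → (0 : Fin d → ℝ) ∉ K →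
      ∀ s : ℝ → Fin d → ℝ, (∀ᶠ u in atTop, s u ∈ K) →
      (∀ᶠ u in atTop, 0 < 1 - r (fun i => q u i * s u i)) →
      Tendsto (fun u =>
          (1 - r (c (fun i => q u i * s u i) • fun i => q u i * s u i)) /
            (1 - r (fun i => q u i * s u i))) atTop (nhds 1) := by
  intro K hK hK0 s hs _
  obtain ⟨ε, hε, hεK⟩ := hK.exists_forall_le' hh_cont.continuousOn fun y hy =>
    hh_pos y (ne_of_mem_of_not_mem hy hK0)
  have hc : Tendsto (fun u => c (fun i => q u i * s u i)) atTop (𝓝 1) :=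
    hc1.comp <| tendsto_mul_nhdsNE_zero hK.isBounded hK0 hq0
      ((eventually_gt_atTop 0).mono fun u hu k => (hq_pos u hu k).ne') hs
  set x : ℝ → Fin d → ℝ := fun u => c (fun i => q u i * s u i) • s u
  set L := Set.Icc (0 : ℝ) 2 • K
  have hL : IsCompact L := isCompact_Icc.smul_set hK
  have hsL : ∀ᶠ u in atTop, s u ∈ L :=
    hs.mono fun u hu => one_smul ℝ (s u) ▸ Set.smul_mem_smul (by norm_num) hu
  have hxL : ∀ᶠ u in atTop, x u ∈ L := by
    filter_upwards [hc (Icc_mem_nhds one_pos one_lt_two), hs] with u hcu hsu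
    exact Set.smul_mem_smul hcu hsu
  have hxs : Tendsto (fun u => (x u, s u)) atTop (𝓤 _) :=
    tendsto_smul_uniformity_of_tendsto_one hc
      (isBoundedUnder_norm_of_eventually_mem hK.isBounded hs)
  have hND := (hconv L hL).tendsto_uniformity_comp_of_uniformContinuousOn
    (hL.uniformContinuousOn_of_continuous hh_cont.continuousOn) hxL hsL hxs
  have hD := ((hconv K hK).eventually_forall_gt (half_lt_self hε) hεK).and hs
  refine (tendsto_div_of_tendsto_uniformity hND (half_pos hε)
    (hD.mono fun u hu => hu.1 _ hu.2)).congr' ?_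
  filter_upwards [eventually_gt_atTop 0] with u hu
  rw [mul_div_mul_left _ _ (pow_ne_zero 2 hu.ne')]
  congr 3
  funext i
  simp only [x, Pi.smul_apply, smul_eq_mul]
  ring

/-- Insensitivity of `1 - r` to multiplicative perturbations tending to `1`: under the
locally uniform convergence `u²(1 - r(q(u) ∘ t)) → h(t)` (Condition 4 of the paper), for
any continuous `c` with `c(t) → 1` as `t → 0`, one has `(1 - r(c(t)·t))/(1 - r(t)) → 1`
along paths `t = q(u) ∘ s(u)` with `s(u)` in a fixed compact set bounded away from `0` and
`1 - r(t) > 0`. -/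
theorem stmt15 {d : ℕ} (r h : (Fin d → ℝ) → ℝ) (q : ℝ → Fin d → ℝ)
    (c : (Fin d → ℝ) → ℝ)
    (hr_cont : Continuous r) (hr_le : ∀ t, r t ≤ 1) (hr0 : r 0 = 1)
    (hh_cont : Continuous h) (hh0 : h 0 = 0) (hh_pos : ∀ t, t ≠ 0 → 0 < h t)
    (hq_pos : ∀ u > (0:ℝ), ∀ i, 0 < q u i)
    (hq0 : Tendsto q atTop (nhds 0))
    (hconv : ∀ K : Set (Fin d → ℝ), IsCompact K →
      TendstoUniformlyOn (fun u t => u ^ 2 * (1 - r (fun i => q u i * t i))) h atTop K)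
    (hc_cont : ContinuousOn c {(0 : Fin d → ℝ)}ᶜ) (hc_pos : ∀ t, t ≠ 0 → 0 < c t)
    (hc1 : Tendsto c (nhdsWithin 0 {(0 : Fin d → ℝ)}ᶜ) (nhds 1)) :
    ∀ K : Set (Fin d → ℝ), IsCompact K → (0 : Fin d → ℝ) ∉ K →
      ∀ s : ℝ → Fin d → ℝ, (∀ᶠ u in atTop, s u ∈ K) →
      (∀ᶠ u in atTop, 0 < 1 - r (fun i => q u i * s u i)) →
      Tendsto (fun u =>
          (1 - r (c (fun i => q u i * s u i) • fun i => q u i * s u i)) /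
            (1 - r (fun i => q u i * s u i))) atTop (nhds 1) :=
  stmt15_general r h q c hh_cont hh_pos hq_pos hq0 hconv hc1
end
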